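/- arXiv:0906.1892 — 3 statements merged into one kernel-verified Lean document; each statement's English description precedes it below -/
import Mathlib

section
/- Let r ≥ 1. An r×r real symmetric matrix X is positive semidefinite if and only if there exist T ∈ T_r⁺ and ψ ∈ {0,1}^r such that X = T · diag(ψ) · Tᵀ, where diag(ψ) is the diagonal matrix with diagonal entries ψ_1,…,ψ_r. -/
/-!
Write `X = Bᴴ B` as the Gram matrix of the columns `vᵢ` of `B`, run Gram–Schmidt on `v` and
complete the nonzero normalized vectors to an orthonormal basis `b`. By Parseval `X = L Lᴴ` with
`L i k = ⟪vᵢ, b_k⟫`, which is lower triangular; its `k`-th column vanishes exactly when the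
Gram–Schmidt vector `g_k` is zero, and otherwise `L k k = ‖g_k‖ > 0`. Replacing the zero columns
by those of the identity gives `T` with `T · diag(ψ) = L` for `ψ k = [g_k ≠ 0]`, hence
`X = T · diag(ψ) · Tᴴ` since `diag(ψ)` is a projection.
-/

open Matrix InnerProductSpace

section GramSchmidt

variable {𝕜 E ι : Type*} [RCLike 𝕜] [NormedAddCommGroup E] [InnerProductSpace 𝕜 E]
  [LinearOrder ι] [LocallyFiniteOrderBot ι] [WellFoundedLT ι]

theorem inner_gramSchmidt_self (f : ι → E) (i : ι) :
    inner 𝕜 (gramSchmidt 𝕜 f i) (f i) = (‖gramSchmidt 𝕜 f i‖ : 𝕜) ^ 2 := by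
  conv_lhs => rw [gramSchmidt_def'' 𝕜 f i]
  rw [inner_add_right, inner_self_eq_norm_sq_to_K, inner_sum, Finset.sum_eq_zero, add_zero]
  intro k hk
  rw [inner_smul_right, gramSchmidt_orthogonal 𝕜 f (Finset.mem_Iio.1 hk).ne', mul_zero]

variable [Fintype ι] [FiniteDimensional 𝕜 E] (h : Module.finrank 𝕜 E = Fintype.card ι) (f : ι → E)

open scoped ComplexOrder in
theorem inner_gramSchmidtOrthonormalBasis_self_pos {i : ι} (hi : gramSchmidtNormed 𝕜 f i ≠ 0) :
    0 < inner 𝕜 (f i) (gramSchmidtOrthonormalBasis h f i) := by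
  have hg : gramSchmidt 𝕜 f i ≠ 0 := by
    rintro hg; simp [gramSchmidtNormed, hg] at hi
  rw [gramSchmidtOrthonormalBasis_apply h hi, gramSchmidtNormed, inner_smul_right,
    ← inner_conj_symm, inner_gramSchmidt_self, ← RCLike.ofReal_pow, RCLike.conj_ofReal,
    ← RCLike.ofReal_inv, ← RCLike.ofReal_mul, RCLike.ofReal_pos]
  have := norm_pos_iff.2 hg
  positivity

theorem Matrix.gram_eq_inner_gramSchmidtOrthonormalBasis_mul_conjTranspose :
    gram 𝕜 f = (of fun i k => inner 𝕜 (f i) (gramSchmidtOrthonormalBasis h f k)) *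
      (of fun i k => inner 𝕜 (f i) (gramSchmidtOrthonormalBasis h f k))ᴴ := by
  ext i j
  simp [mul_apply, (gramSchmidtOrthonormalBasis h f).sum_inner_mul_inner]

end GramSchmidt

section Triangular

variable {R n : Type*} [Semiring R] [StarRing R] [PartialOrder R] [ZeroLEOneClass R]
  [NeZero (1 : R)] [Fintype n] [DecidableEq n] [Preorder n]

theorem Matrix.exists_lowerTriangular_mul_diagonal_mul_conjTranspose_eq (L : Matrix n n R)
    (ψ : n → Bool) (hL_lower : ∀ i j, i < j → L i j = 0) (hL_pos : ∀ i, ψ i → 0 < L i i)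
    (hL_zero : ∀ i k, ψ k = false → L i k = 0) :
    ∃ T : Matrix n n R, (∀ i j, i < j → T i j = 0) ∧ (∀ i, 0 < T i i) ∧
      L * Lᴴ = T * diagonal (fun j => if ψ j then 1 else 0) * Tᴴ := by
  set D : Matrix n n R := diagonal fun j => if ψ j then 1 else 0
  set T : Matrix n n R := of fun i k => if ψ k then L i k else (1 : Matrix n n R) i k
  have hTD : T * D = L := by
    ext i k
    cases hk : ψ k <;> simp [T, D, hk, hL_zero]
  have hDD : D * Dᴴ = D := by
    simp only [D, diagonal_conjTranspose, diagonal_mul_diagonal]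
    congr 1; ext j; cases hj : ψ j <;> simp [hj]
  refine ⟨T, fun i j hij => ?_, fun i => ?_, ?_⟩
  · cases ψ j <;> simp [T, hL_lower i j hij, one_apply_ne hij.ne]
  · cases hi : ψ i <;> simp [T, hi, hL_pos]
  · calc L * Lᴴ = T * D * (T * D)ᴴ := by rw [hTD]
      _ = T * (D * Dᴴ) * Tᴴ := by rw [conjTranspose_mul]; noncomm_ring
      _ = T * D * Tᴴ := by rw [hDD]

end Triangular

open scoped ComplexOrder MatrixOrder in
theorem Matrix.PosSemidef.exists_eq_gram {𝕜 n : Type*} [RCLike 𝕜] [Fintype n] [DecidableEq n]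
    {X : Matrix n n 𝕜} (hX : X.PosSemidef) : ∃ v : n → EuclideanSpace 𝕜 n, X = gram 𝕜 v := by
  obtain ⟨B, rfl⟩ : ∃ B : Matrix n n 𝕜, X = star B * B := by
    open scoped Matrix.Norms.L2Operator in
    exact CStarAlgebra.nonneg_iff_eq_star_mul_self.mp hX.nonneg
  refine ⟨fun j => WithLp.toLp 2 fun k => B k j, ?_⟩
  rw [gram_eq_conjTranspose_mul (EuclideanSpace.basisFun n 𝕜)]
  rfl

open scoped ComplexOrder in
theorem Matrix.gram_eq_lowerTriangular_mul_diagonal_mul_conjTranspose {𝕜 E ι : Type*} [RCLike 𝕜]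
    [NormedAddCommGroup E] [InnerProductSpace 𝕜 E] [FiniteDimensional 𝕜 E] [LinearOrder ι]
    [LocallyFiniteOrderBot ι] [Fintype ι] [DecidableEq ι]
    (h : Module.finrank 𝕜 E = Fintype.card ι) (f : ι → E) :
    ∃ (T : Matrix ι ι 𝕜) (ψ : ι → Bool), (∀ i j, i < j → T i j = 0) ∧ (∀ i, 0 < T i i) ∧
      gram 𝕜 f = T * diagonal (fun j => if ψ j then 1 else 0) * Tᴴ := by
  classical
  set ψ : ι → Bool := fun k => decide (gramSchmidtNormed 𝕜 f k ≠ 0)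
  have hlower (i j : ι) (hij : i < j) : inner 𝕜 (f i) (gramSchmidtOrthonormalBasis h f j) = 0 := by
    rw [← inner_conj_symm, gramSchmidtOrthonormalBasis_inv_triangular h f hij, map_zero]
  have hpos (i : ι) (hi : ψ i) : 0 < inner 𝕜 (f i) (gramSchmidtOrthonormalBasis h f i) :=
    inner_gramSchmidtOrthonormalBasis_self_pos h f (of_decide_eq_true hi)
  have hzero (i k : ι) (hk : ψ k = false) :
      inner 𝕜 (f i) (gramSchmidtOrthonormalBasis h f k) = 0 := by
    rw [← inner_conj_symm,
      inner_gramSchmidtOrthonormalBasis_eq_zero h (not_not.1 (of_decide_eq_false hk)), map_zero]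
  obtain ⟨T, hT⟩ :=
    exists_lowerTriangular_mul_diagonal_mul_conjTranspose_eq _ ψ hlower hpos hzero
  exact ⟨T, ψ, gram_eq_inner_gramSchmidtOrthonormalBasis_mul_conjTranspose h f ▸ hT⟩

open scoped ComplexOrder in
theorem Matrix.posSemidef_iff_exists_lowerTriangular_mul_diagonal_mul_conjTranspose
    {𝕜 n : Type*} [RCLike 𝕜] [Fintype n] [DecidableEq n] [LinearOrder n]
    [LocallyFiniteOrderBot n] {X : Matrix n n 𝕜} :
    X.PosSemidef ↔ ∃ (T : Matrix n n 𝕜) (ψ : n → Bool), (∀ i j, i < j → T i j = 0) ∧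
      (∀ i, 0 < T i i) ∧ X = T * diagonal (fun j => if ψ j then 1 else 0) * Tᴴ := by
  constructor
  · intro hX
    obtain ⟨v, rfl⟩ := hX.exists_eq_gram
    exact gram_eq_lowerTriangular_mul_diagonal_mul_conjTranspose finrank_euclideanSpace v
  · rintro ⟨T, ψ, -, -, rfl⟩
    refine (PosSemidef.diagonal fun j => ?_).mul_mul_conjTranspose_same T
    cases ψ j <;> simp

theorem posSemidef_iff_exists_triangular_diag_general (r : ℕ)
    (X : Matrix (Fin r) (Fin r) ℝ) :
    X.PosSemidef ↔
      ∃ (T : Matrix (Fin r) (Fin r) ℝ) (ψ : Fin r → Bool),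
        (∀ i j : Fin r, i < j → T i j = 0) ∧ (∀ i : Fin r, 0 < T i i) ∧
        X = T * Matrix.diagonal (fun j => if ψ j then (1 : ℝ) else 0) * Tᵀ := by
  simpa only [conjTranspose_eq_transpose_of_trivial] using
    posSemidef_iff_exists_lowerTriangular_mul_diagonal_mul_conjTranspose (X := X)

/-- orbit decomposition of the closed cone.
A real symmetric matrix `X` is positive semidefinite if and only if it can be written as
`X = T · diag(ψ) · Tᵀ` with `T` lower triangular with strictly positive diagonal entries
and `ψ ∈ {0,1}^r`. -/
theorem posSemidef_iff_exists_triangular_diag (r : ℕ) (hr : 1 ≤ r)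
    (X : Matrix (Fin r) (Fin r) ℝ) (hX : X.IsSymm) :
    X.PosSemidef ↔
      ∃ (T : Matrix (Fin r) (Fin r) ℝ) (ψ : Fin r → Bool),
        (∀ i j : Fin r, i < j → T i j = 0) ∧ (∀ i : Fin r, 0 < T i i) ∧
        X = T * Matrix.diagonal (fun j => if ψ j then (1 : ℝ) else 0) * Tᵀ :=
  posSemidef_iff_exists_triangular_diag_general r X
end

section
/- Let r ≥ 1, s ∈ ℝ^r, T ∈ T_r⁺, and let X be an r×r real symmetric positive definite matrix. Then T X Tᵀ and T Tᵀ are positive definite and Δ_s(T X Tᵀ) = Δ_s(T Tᵀ) · Δ_s(X). -/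
/-!
Because `T` is lower triangular, the top-left `k × k` block of `T X Tᵀ` is `T_k X_k T_kᵀ`, where
`T_k`, `X_k` are the top-left blocks of `T` and `X`. Hence `m_k(T X Tᵀ) = m_k(T)² m_k(X)`, and
with `X = 1` also `m_k(T Tᵀ) = m_k(T)²`. All these minors are positive, since top-left blocks of
positive definite matrices are positive definite, so each factor `(m_{k+1}/m_k)^{s_k}` of
`Δ_s(T X Tᵀ)` splits as a product.
-/

open Matrix

/-- The leading principal minor of order `k`: the determinant of the top-left `k × k`
submatrix (equal to `1` for `k = 0`, and junk value `0` for `k > r`). -/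
noncomputable def leadingMinor {r : ℕ} (X : Matrix (Fin r) (Fin r) ℝ) (k : ℕ) : ℝ :=
  if h : k ≤ r then (X.submatrix (Fin.castLE h) (Fin.castLE h)).det else 0

/-- The generalized power `Δ_s(Y) = ∏_{k=1}^r (m_k(Y)/m_{k-1}(Y))^{s_k}`. -/
noncomputable def gpow {r : ℕ} (s : Fin r → ℝ) (Y : Matrix (Fin r) (Fin r) ℝ) : ℝ :=
  ∏ k : Fin r, (leadingMinor Y ((k : ℕ) + 1) / leadingMinor Y (k : ℕ)) ^ s k

namespace Matrix

variable {R : Type*} {r k : ℕ}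

lemma submatrix_castLE_mul [Semiring R] {n m : Type*} {A : Matrix (Fin r) (Fin r) R}
    (hA : A.IsLowerTriangular) (h : k ≤ r) (B : Matrix (Fin r) n R) (g : m → n) :
    (A * B).submatrix (Fin.castLE h) g =
      A.submatrix (Fin.castLE h) (Fin.castLE h) * B.submatrix (Fin.castLE h) g := by
  ext i j
  simp only [submatrix_apply, mul_apply]
  refine (Fintype.sum_of_injective (Fin.castLE h) (Fin.castLE_injective h) _ _
    (fun a ha => ?_) fun _ => rfl).symm
  have hka : k ≤ (a : ℕ) := not_lt.1 fun hak => ha ⟨⟨a, hak⟩, rfl⟩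
  have hia : Fin.castLE h i < a := Fin.lt_def.2 (lt_of_lt_of_le i.isLt hka)
  rw [show A (Fin.castLE h i) a = 0 from hA hia, zero_mul]

lemma submatrix_mul_transpose_castLE [CommSemiring R] {n m : Type*}
    {A : Matrix (Fin r) (Fin r) R} (hA : A.IsLowerTriangular) (h : k ≤ r)
    (B : Matrix n (Fin r) R) (g : m → n) :
    (B * Aᵀ).submatrix g (Fin.castLE h) =
      B.submatrix g (Fin.castLE h) * (A.submatrix (Fin.castLE h) (Fin.castLE h))ᵀ := by
  apply transpose_injective
  rw [transpose_submatrix, transpose_mul, transpose_transpose, submatrix_castLE_mul hA,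
    transpose_mul, transpose_transpose, transpose_submatrix]

lemma PosDef.mul_mul_transpose_of_isUnit {n : Type*} [Fintype n] [DecidableEq n]
    {X T : Matrix n n ℝ} (hX : X.PosDef) (hT : IsUnit T) : (T * X * Tᵀ).PosDef := by
  simpa using hX.mul_mul_conjTranspose_same (vecMul_injective_iff_isUnit.2 hT)

lemma IsLowerTriangular.isUnit_of_diag_pos {n : Type*} [Fintype n] [DecidableEq n]
    [LinearOrder n] {T : Matrix n n ℝ} (hT : T.IsLowerTriangular) (hTd : ∀ i, 0 < T i i) :
    IsUnit T := by
  rw [isUnit_iff_isUnit_det, det_of_isLowerTriangular T hT]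
  exact (Finset.prod_pos fun i _ => hTd i).ne'.isUnit

end Matrix

section LeadingMinor

variable {r k : ℕ}

lemma leadingMinor_of_le (Y : Matrix (Fin r) (Fin r) ℝ) (h : k ≤ r) :
    leadingMinor Y k = (Y.submatrix (Fin.castLE h) (Fin.castLE h)).det :=
  dif_pos h

lemma leadingMinor_one (h : k ≤ r) : leadingMinor (1 : Matrix (Fin r) (Fin r) ℝ) k = 1 := by
  rw [leadingMinor_of_le _ h, submatrix_one _ (Fin.castLE_injective h), det_one]

lemma Matrix.PosDef.leadingMinor_pos {X : Matrix (Fin r) (Fin r) ℝ} (hX : X.PosDef)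
    (h : k ≤ r) : 0 < leadingMinor X k := by
  rw [leadingMinor_of_le _ h]
  exact (hX.submatrix (Fin.castLE_injective h)).det_pos

lemma leadingMinor_mul_mul_transpose {T : Matrix (Fin r) (Fin r) ℝ} (hT : T.IsLowerTriangular)
    (Y : Matrix (Fin r) (Fin r) ℝ) (k : ℕ) :
    leadingMinor (T * Y * Tᵀ) k = leadingMinor T k ^ 2 * leadingMinor Y k := by
  by_cases h : k ≤ r
  · rw [leadingMinor_of_le _ h, leadingMinor_of_le _ h, leadingMinor_of_le _ h,
      submatrix_mul_transpose_castLE hT, submatrix_castLE_mul hT, det_mul, det_mul,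
      det_transpose]
    ring
  · simp [leadingMinor, h]

lemma leadingMinor_mul_transpose {T : Matrix (Fin r) (Fin r) ℝ} (hT : T.IsLowerTriangular)
    (h : k ≤ r) : leadingMinor (T * Tᵀ) k = leadingMinor T k ^ 2 := by
  simpa [leadingMinor_one h] using leadingMinor_mul_mul_transpose hT 1 k

lemma gpow_eq_mul_of_leadingMinor_eq_mul (s : Fin r → ℝ) {A B C : Matrix (Fin r) (Fin r) ℝ}
    (hB : ∀ k ≤ r, 0 ≤ leadingMinor B k) (hC : ∀ k ≤ r, 0 ≤ leadingMinor C k)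
    (hA : ∀ k ≤ r, leadingMinor A k = leadingMinor B k * leadingMinor C k) :
    gpow s A = gpow s B * gpow s C := by
  simp only [gpow, ← Finset.prod_mul_distrib]
  refine Finset.prod_congr rfl fun k _ => ?_
  rw [hA _ k.isLt, hA _ k.isLt.le, mul_div_mul_comm,
    Real.mul_rpow (div_nonneg (hB _ k.isLt) (hB _ k.isLt.le))
      (div_nonneg (hC _ k.isLt) (hC _ k.isLt.le))]

end LeadingMinor

theorem gpow_triangular_congruence_general (r : ℕ) (s : Fin r → ℝ)
    (T X : Matrix (Fin r) (Fin r) ℝ)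
    (hT : ∀ i j : Fin r, i < j → T i j = 0) (hTd : ∀ i : Fin r, 0 < T i i)
    (hX : X.PosDef) :
    (T * X * Tᵀ).PosDef ∧ (T * Tᵀ).PosDef ∧
      gpow s (T * X * Tᵀ) = gpow s (T * Tᵀ) * gpow s X := by
  have hlow : T.IsLowerTriangular := fun i j hij => hT i j hij
  have hunit : IsUnit T := hlow.isUnit_of_diag_pos hTd
  have hTT : (T * Tᵀ).PosDef := by
    simpa using PosDef.one.mul_mul_transpose_of_isUnit hunit
  refine ⟨hX.mul_mul_transpose_of_isUnit hunit, hTT, ?_⟩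
  refine gpow_eq_mul_of_leadingMinor_eq_mul s (fun k hk => (hTT.leadingMinor_pos hk).le)
    (fun k hk => (hX.leadingMinor_pos hk).le) fun k hk => ?_
  rw [leadingMinor_mul_mul_transpose hlow, leadingMinor_mul_transpose hlow hk]

/-- For `T` lower triangular with positive diagonal and `X` symmetric
positive definite, `T X Tᵀ` and `T Tᵀ` are positive definite and
`Δ_s(T X Tᵀ) = Δ_s(T Tᵀ) · Δ_s(X)`. -/
theorem gpow_triangular_congruence (r : ℕ) (hr : 1 ≤ r) (s : Fin r → ℝ)
    (T X : Matrix (Fin r) (Fin r) ℝ)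
    (hT : ∀ i j : Fin r, i < j → T i j = 0) (hTd : ∀ i : Fin r, 0 < T i i)
    (hX : X.PosDef) :
    (T * X * Tᵀ).PosDef ∧ (T * Tᵀ).PosDef ∧
      gpow s (T * X * Tᵀ) = gpow s (T * Tᵀ) * gpow s X :=
  gpow_triangular_congruence_general r s T X hT hTd hX
end

section
/- Let r ≥ 1. The function θ ↦ log det θ, defined on the open subset of positive definite matrices of the real vector space Sym_r, is twice Fréchet differentiable; at every positive definite θ its first derivative is the linear map K ↦ tr(θ⁻¹ K) on Sym_r, and its second derivative is the bilinear map (K, L) ↦ −tr(θ⁻¹ K θ⁻¹ L) on Sym_r × Sym_r. -/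
/-!
Jacobi's formula: `det` is multilinear in the rows, so its derivative at `A` sends `K` to
`∑ᵢ det (A with row i replaced by Kᵢ)`, which by Laplace expansion along row `i` is
`tr (adj A · K)`. Dividing by `det A` gives `K ↦ tr (A⁻¹ K)` for `log det`. The second derivative
is then the derivative of `θ ↦ tr (θ⁻¹ ·)`, which is linear in `θ⁻¹`, and inversion has
derivative `K ↦ -A⁻¹ K A⁻¹`.
-/

open Matrix

/-- Coordinates on the real vector space `Sym_r` of symmetric `r × r` matrices:
the on-and-above-diagonal positions. -/
abbrev SymIdx (r : ℕ) := {p : Fin r × Fin r // p.1 ≤ p.2}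

/-- The symmetric matrix with the given on-and-above-diagonal coordinates. -/
def symOf {r : ℕ} (x : SymIdx r → ℝ) : Matrix (Fin r) (Fin r) ℝ :=
  Matrix.of fun i j =>
    if h : i ≤ j then x ⟨(i, j), h⟩ else x ⟨(j, i), (le_total i j).resolve_left h⟩

lemma symOf_add {r : ℕ} (x y : SymIdx r → ℝ) : symOf (x + y) = symOf x + symOf y := by
  ext i j; by_cases h : i ≤ j <;> simp [symOf, h]

lemma symOf_smul {r : ℕ} (c : ℝ) (x : SymIdx r → ℝ) : symOf (c • x) = c • symOf x := by
  ext i j; by_cases h : i ≤ j <;> simp [symOf, h]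

/-- The linear form `K ↦ tr(M K)` on `Sym_r` (in coordinates). -/
noncomputable def trForm {r : ℕ} (M : Matrix (Fin r) (Fin r) ℝ) :
    (SymIdx r → ℝ) →ₗ[ℝ] ℝ where
  toFun K := (M * symOf K).trace
  map_add' x y := by simp [symOf_add, Matrix.mul_add]
  map_smul' c x := by simp [symOf_smul, Matrix.mul_smul]

/-- The linear form `K ↦ tr(M K)` on `Sym_r`, as a continuous linear map. -/
noncomputable def trCLM {r : ℕ} (M : Matrix (Fin r) (Fin r) ℝ) :
    (SymIdx r → ℝ) →L[ℝ] ℝ := LinearMap.toContinuousLinearMap (trForm M)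

/-- The bilinear form `(K, L) ↦ −tr(M K M L)` on `Sym_r`. -/
noncomputable def negTrBForm {r : ℕ} (M : Matrix (Fin r) (Fin r) ℝ) :
    (SymIdx r → ℝ) →ₗ[ℝ] (SymIdx r → ℝ) →ₗ[ℝ] ℝ :=
  LinearMap.mk₂ ℝ (fun K L => -(M * symOf K * M * symOf L).trace)
    (fun K K' L => by simp [symOf_add, Matrix.add_mul, Matrix.mul_add]; ring)
    (fun c K L => by simp [symOf_smul, Matrix.smul_mul, Matrix.mul_smul])
    (fun K L L' => by simp [symOf_add, Matrix.mul_add]; ring)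
    (fun c K L => by simp [symOf_smul, Matrix.mul_smul])

/-- The bilinear form `(K, L) ↦ −tr(M K M L)` on `Sym_r`, as a continuous bilinear map. -/
noncomputable def negTrBCLM {r : ℕ} (M : Matrix (Fin r) (Fin r) ℝ) :
    (SymIdx r → ℝ) →L[ℝ] (SymIdx r → ℝ) →L[ℝ] ℝ :=
  LinearMap.toContinuousLinearMap
    ((LinearMap.toContinuousLinearMap (E := SymIdx r → ℝ) (F' := ℝ)).toLinearMap ∘ₗ
      negTrBForm M)

namespace Matrix

variable {n : Type*} [Fintype n] [DecidableEq n]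

theorem det_updateRow_eq_sum_adjugate {R : Type*} [CommRing R] (A : Matrix n n R) (i : n)
    (b : n → R) : (A.updateRow i b).det = ∑ j, adjugate A j i * b j := by
  rw [← cramer_transpose_apply, cramer_eq_adjugate_mulVec, ← adjugate_transpose]
  rfl

theorem sum_det_updateRow {R : Type*} [CommRing R] (A K : Matrix n n R) :
    ∑ i, (A.updateRow i (K i)).det = trace (adjugate A * K) := by
  simp only [det_updateRow_eq_sum_adjugate, trace, diag_apply, mul_apply]
  exact Finset.sum_comm

variable {𝕜 : Type*} [NontriviallyNormedField 𝕜]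

noncomputable def detRowContinuousMultilinear :
    ContinuousMultilinearMap 𝕜 (fun _ : n => n → 𝕜) 𝕜 :=
  { (detRowAlternating : (n → 𝕜) [⋀^n]→ₗ[𝕜] 𝕜).toMultilinearMap with
    cont := continuous_id.matrix_det }

theorem linearDeriv_detRowContinuousMultilinear_apply (A K : n → n → 𝕜) :
    detRowContinuousMultilinear.linearDeriv A K = trace (adjugate (of A) * of K) := by
  rw [ContinuousMultilinearMap.linearDeriv_apply, ← sum_det_updateRow]
  rfl

variable [CompleteSpace 𝕜]

theorem hasFDerivAt_det (A : Matrix n n 𝕜) :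
    HasFDerivAt det
      (LinearMap.toContinuousLinearMap (traceLinearMap n 𝕜 𝕜 ∘ₗ LinearMap.mulLeft 𝕜 (adjugate A)))
      A := by
  refine (detRowContinuousMultilinear.hasFDerivAt A).congr_fderiv ?_
  ext K
  exact linearDeriv_detRowContinuousMultilinear_apply A K

section LinftyOp

attribute [local instance] Matrix.linftyOpNormedAddCommGroup Matrix.linftyOpNormedSpace
  Matrix.linftyOpNormedRing Matrix.linftyOpNormedAlgebra

theorem hasFDerivAt_inv {A : Matrix n n 𝕜} (hA : IsUnit A.det) :
    HasFDerivAt (fun M : Matrix n n 𝕜 => M⁻¹)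
      (-ContinuousLinearMap.mulLeftRight 𝕜 (Matrix n n 𝕜) A⁻¹ A⁻¹) A := by
  -- Instance search finds completeness only for the global uniformity on matrices.
  have : HasSummableGeomSeries (Matrix n n 𝕜) :=
    @instHasSummableGeomSeriesOfCompleteSpace _ _ (FiniteDimensional.complete 𝕜 _)
  obtain ⟨u, rfl⟩ := (isUnit_iff_isUnit_det A).mpr hA
  simp only [nonsing_inv_eq_ringInverse, Ring.inverse_unit]
  exact hasFDerivAt_ringInverse u

end LinftyOp

end Matrix

section SymCoordinates

attribute [local instance] Matrix.linftyOpNormedAddCommGroup Matrix.linftyOpNormedSpace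
  Matrix.linftyOpNormedRing Matrix.linftyOpNormedAlgebra

variable {r : ℕ}

noncomputable def symOfL (r : ℕ) : (SymIdx r → ℝ) →L[ℝ] Matrix (Fin r) (Fin r) ℝ :=
  LinearMap.toContinuousLinearMap
    { toFun := symOf, map_add' := symOf_add, map_smul' := symOf_smul }

noncomputable def trCLML (r : ℕ) : Matrix (Fin r) (Fin r) ℝ →L[ℝ] (SymIdx r → ℝ) →L[ℝ] ℝ :=
  LinearMap.toContinuousLinearMap
    { toFun := trCLM
      map_add' M N := by ext K; simp [trCLM, trForm, Matrix.add_mul]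
      map_smul' c M := by ext K; simp [trCLM, trForm] }

theorem hasFDerivAt_log_det_symOf {θ : SymIdx r → ℝ} (hθ : (symOf θ).det ≠ 0) :
    HasFDerivAt (fun X : SymIdx r → ℝ => Real.log (symOf X).det) (trCLM (symOf θ)⁻¹) θ := by
  have h := ((hasFDerivAt_det (symOf θ)).comp θ (symOfL r).hasFDerivAt).log hθ
  refine h.congr_fderiv ?_
  ext K
  change (symOf θ).det⁻¹ * trace (adjugate (symOf θ) * symOf K) = trace ((symOf θ)⁻¹ * symOf K)
  rw [inv_def, Ring.inverse_eq_inv', smul_mul_assoc, trace_smul, smul_eq_mul]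

theorem hasFDerivAt_trCLM_inv_symOf {θ : SymIdx r → ℝ} (hθ : IsUnit (symOf θ).det) :
    HasFDerivAt (fun X : SymIdx r → ℝ => trCLM (symOf X)⁻¹) (negTrBCLM (symOf θ)⁻¹) θ := by
  have h := (trCLML r).hasFDerivAt.comp θ ((hasFDerivAt_inv hθ).comp θ (symOfL r).hasFDerivAt)
  refine h.congr_fderiv ?_
  ext K L
  change trace (-((symOf θ)⁻¹ * symOf K * (symOf θ)⁻¹) * symOf L)
    = -trace ((symOf θ)⁻¹ * symOf K * (symOf θ)⁻¹ * symOf L)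
  rw [Matrix.neg_mul, trace_neg]

end SymCoordinates

theorem hasFDerivAt_log_det_general (r : ℕ) :
    ∀ θ : SymIdx r → ℝ, (symOf θ).PosDef →
      HasFDerivAt (fun X : SymIdx r → ℝ => Real.log (symOf X).det)
        (trCLM (symOf θ)⁻¹) θ ∧
      HasFDerivAt (fun X : SymIdx r → ℝ => trCLM (symOf X)⁻¹)
        (negTrBCLM (symOf θ)⁻¹) θ := by
  intro θ hθ
  have hdet : (symOf θ).det ≠ 0 := hθ.det_pos.ne'
  exact ⟨hasFDerivAt_log_det_symOf hdet, hasFDerivAt_trCLM_inv_symOf hdet.isUnit⟩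

/-- On the open set of positive definite matrices in `Sym_r`
(realized via on-and-above-diagonal coordinates), the map `θ ↦ log det θ` is twice Fréchet
differentiable: at every positive definite `θ` its first derivative is the linear map
`K ↦ tr(θ⁻¹ K)` and its second derivative is the bilinear map
`(K, L) ↦ −tr(θ⁻¹ K θ⁻¹ L)`. -/
theorem hasFDerivAt_log_det (r : ℕ) (hr : 1 ≤ r) :
    ∀ θ : SymIdx r → ℝ, (symOf θ).PosDef →
      HasFDerivAt (fun X : SymIdx r → ℝ => Real.log (symOf X).det)
        (trCLM (symOf θ)⁻¹) θ ∧
      HasFDerivAt (fun X : SymIdx r → ℝ => trCLM (symOf X)⁻¹)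
        (negTrBCLM (symOf θ)⁻¹) θ :=
  hasFDerivAt_log_det_general r
end
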